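/- arXiv:2306.14315 — 10 statements merged into one kernel-verified Lean document; each statement's English description precedes it below -/
import Mathlib

section
/- Let n, k be positive integers with 2k < n, M = 1 - 2k/n, and p(x) = (1+x)^{n-k}(1-x)^k. Then for every x ∈ [0, 1-M] one has p(M - x) ≥ p(M + x). -/
/-!
With `u = 1 + M` and `v = 1 - M`, the defining relation of `M` reads `(n - k) v = k u`, and
the claim becomes `(u + x)^(n-k) (v - x)^k ≤ (u - x)^(n-k) (v + x)^k`. The difference of the
logarithms of the two sides vanishes at `x = 0`, and its derivative is
`2 k x² (u² - v²) / (v (v² - x²) (u² - x²)) ≥ 0` because `v ≤ u`. The endpoint `x = v` follows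
by continuity.
-/

open Real Set

section

variable {a b u v : ℝ}

lemma weighted_log_deriv_nonneg (hb : 0 ≤ b) (hv : 0 < v) (hvu : v ≤ u) (hab : a * v = b * u)
    {t : ℝ} (ht : t ∈ Ioo (-v) v) :
    0 ≤ b / (v + t) + b / (v - t) - a / (u - t) - a / (u + t) := by
  obtain ⟨htl, htr⟩ := ht
  have ha : a = b * u / v := by field_simp; linarith
  have hvt : 0 < v ^ 2 - t ^ 2 := by nlinarith
  have hut : 0 < u ^ 2 - t ^ 2 := by nlinarith
  have key : b / (v + t) + b / (v - t) - a / (u - t) - a / (u + t) =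
      2 * b * t ^ 2 * (u ^ 2 - v ^ 2) / (v * (v ^ 2 - t ^ 2) * (u ^ 2 - t ^ 2)) := by
    have : v + t ≠ 0 := by linarith
    have : v - t ≠ 0 := by linarith
    have : u + t ≠ 0 := by linarith
    have : u - t ≠ 0 := by linarith
    rw [ha]
    field_simp
    ring
  rw [key]
  have : 0 ≤ u ^ 2 - v ^ 2 := by nlinarith
  positivity

lemma weighted_log_le (hb : 0 ≤ b) (hv : 0 < v) (hvu : v ≤ u) (hab : a * v = b * u)
    {x : ℝ} (hx : x ∈ Ico 0 v) :
    a * log (u + x) + b * log (v - x) ≤ a * log (u - x) + b * log (v + x) := by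
  set g : ℝ → ℝ := fun t ↦ a * log (u - t) + b * log (v + t) - (a * log (u + t) + b * log (v - t))
  have hg : ∀ t ∈ Ioo (-v) v,
      HasDerivAt g (b / (v + t) + b / (v - t) - a / (u - t) - a / (u + t)) t := by
    rintro t ⟨htl, htr⟩
    have hu_sub := ((hasDerivAt_id t).const_sub u).log (by simp; linarith)
    have hv_add := ((hasDerivAt_id t).const_add v).log (by simp; linarith)
    have hu_add := ((hasDerivAt_id t).const_add u).log (by simp; linarith)
    have hv_sub := ((hasDerivAt_id t).const_sub v).log (by simp; linarith)
    refine (((hu_sub.const_mul a).add (hv_add.const_mul b)).sub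
      ((hu_add.const_mul a).add (hv_sub.const_mul b))).congr_deriv ?_
    simp only [id]
    ring
  have hsub : Ico 0 v ⊆ Ioo (-v) v := fun t ht ↦ ⟨by linarith [ht.1], ht.2⟩
  have hmono : MonotoneOn g (Ico 0 v) := by
    refine monotoneOn_of_hasDerivWithinAt_nonneg (convex_Ico 0 v)
      (fun t ht ↦ (hg t (hsub ht)).continuousAt.continuousWithinAt)
      (fun t ht ↦ (hg t (hsub (interior_subset ht))).hasDerivWithinAt)
      (fun t ht ↦ weighted_log_deriv_nonneg hb hv hvu hab (hsub (interior_subset ht)))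
  have := hmono ⟨le_rfl, hv⟩ hx hx.1
  simp only [g, sub_zero, add_zero, sub_self] at this
  linarith

lemma add_pow_mul_sub_pow_le (m l : ℕ) (hv : 0 < v) (hvu : v ≤ u) (hml : m * v = l * u)
    {x : ℝ} (hx : x ∈ Icc 0 v) :
    (u + x) ^ m * (v - x) ^ l ≤ (u - x) ^ m * (v + x) ^ l := by
  have hIco : ∀ x ∈ Ico 0 v, (u + x) ^ m * (v - x) ^ l ≤ (u - x) ^ m * (v + x) ^ l := by
    rintro x ⟨hx0, hxv⟩
    have h1 : 0 < u + x := by linarith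
    have h2 : 0 < v - x := by linarith
    have h3 : 0 < u - x := by linarith
    have h4 : 0 < v + x := by linarith
    rw [← log_le_log_iff (by positivity) (by positivity),
      log_mul (by positivity) (by positivity), log_mul (by positivity) (by positivity),
      log_pow, log_pow, log_pow, log_pow]
    exact weighted_log_le (Nat.cast_nonneg l) hv hvu hml ⟨hx0, hxv⟩
  have hclosed : IsClosed {x | (u + x) ^ m * (v - x) ^ l ≤ (u - x) ^ m * (v + x) ^ l} :=
    isClosed_le (by fun_prop) (by fun_prop)
  rw [← closure_Ico hv.ne] at hx
  exact hclosed.closure_subset_iff.mpr hIco hx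

end

/-- For `p(x) = (1+x)^(n-k) (1-x)^k`, `M = 1 - 2k/n`, one has
`p(M - x) ≥ p(M + x)` for all `x ∈ [0, 1-M]`. -/
theorem stmt_2 (n k : ℕ) (hk : 0 < k) (hn : 2 * k < n)
    (p : ℝ → ℝ) (hp : ∀ x : ℝ, p x = (1 + x) ^ (n - k) * (1 - x) ^ k)
    (M : ℝ) (hM : M = 1 - 2 * (k : ℝ) / n) :
    ∀ x ∈ Set.Icc (0 : ℝ) (1 - M), p (M + x) ≤ p (M - x) := by
  intro x hx
  have hn0 : (0 : ℝ) < n := by exact_mod_cast (show 0 < n by omega)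
  have hk0 : (0 : ℝ) < k := by exact_mod_cast hk
  have h2kn : 2 * (k : ℝ) < n := by exact_mod_cast hn
  have hv : 0 < 1 - M := by
    have : 0 < 2 * (k : ℝ) / n := by positivity
    linarith
  have hvu : 1 - M ≤ 1 + M := by
    have : 2 * (k : ℝ) / n < 1 := (div_lt_one hn0).mpr h2kn
    linarith
  have hrel : ((n - k : ℕ) : ℝ) * (1 - M) = k * (1 + M) := by
    rw [Nat.cast_sub (by omega), hM]
    field_simp
    ring
  have := add_pow_mul_sub_pow_le (n - k) k hv hvu hrel hx
  rw [hp, hp]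
  convert this using 3 <;> ring
end

section
/- Let K ⊂ ℂ be a set with diameter 2 containing the points -1 and 1, and suppose the width of K is w > 0 (the width is the minimum over directions γ of the projection length of K onto the direction e^{iγ}). Then K is contained in the rectangle {x + iy : -1 ≤ x ≤ 1, -w ≤ y ≤ w}. -/
/-
Every `z = x + iy ∈ K` lies within distance `2` of both `1` and `-1`, which gives `|x| ≤ 1` and
`(|x| + 1)² + y² ≤ 4`. The width of `K` is at least that of the triangle `-1, 1, z`, i.e. its
smallest altitude; the altitude onto `[-1, 1]` is `|y|`, and the other two are `2|y| / |z ∓ 1| ≥ |y|`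
because the sides through `z` are at most `2` long.
-/

open Complex

/-- The width of a planar set: the minimum over directions `γ` of the length of the
projection of `K` onto the direction `e^{iγ}`. -/
noncomputable def setWidth (K : Set ℂ) : ℝ :=
  ⨅ γ : ℝ, (sSup ((fun z : ℂ => (z * Complex.exp (γ * Complex.I)).re) '' K) -
    sInf ((fun z : ℂ => (z * Complex.exp (γ * Complex.I)).re) '' K))

/- With `z = ξ + iη` and a unit direction `(κ, σ)` in the first quadrant, a projection range of the
triangle `-1, 1, z` below `η` would force both `2κ < η` and `κ (1 - ξ) < η (1 - σ)`. -/
lemma mul_one_sub_le_mul_one_sub {ξ η κ σ : ℝ} (hξ : 0 ≤ ξ) (hκ : 0 ≤ κ) (hσ : 0 ≤ σ)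
    (hκσ : κ ^ 2 + σ ^ 2 = 1) (hξη : (ξ + 1) ^ 2 + η ^ 2 ≤ 4) (hκη : 2 * κ < η) :
    η * (1 - σ) ≤ κ * (1 - ξ) := by
  by_contra! hlt
  set a := 1 - ξ
  have hη2 : η ^ 2 ≤ a * (4 - a) := by nlinarith
  have hσ1 : σ ≤ 1 := by nlinarith
  have ha0 : 0 < a := by
    by_contra! ha0
    nlinarith
  have hκ0 : 0 < κ := by
    rcases hκ.lt_or_eq with h | rfl
    · exact h
    · obtain rfl : σ = 1 := by nlinarith
      linarith
  have hηκ : a * (1 + σ) < η * κ := by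
    have : κ * (a * (1 + σ)) < κ * (η * κ) := by nlinarith
    exact lt_of_mul_lt_mul_left this hκ0.le
  have hσ_lt : σ < 1 - a / 2 := by
    have : a ^ 2 * (1 + σ) ^ 2 < η ^ 2 * (1 - σ) * (1 + σ) := by nlinarith
    have : a ^ 2 * (1 + σ) < η ^ 2 * (1 - σ) := by nlinarith
    nlinarith
  have hσ_gt : (1 - a / 2) ^ 2 < σ ^ 2 := by nlinarith
  nlinarith

lemma abs_le_of_projection_bounds {x y c s R : ℝ} (hcs : c ^ 2 + s ^ 2 = 1)
    (hxy : (|x| + 1) ^ 2 + y ^ 2 ≤ 4) (hc : |2 * c| ≤ R) (hm : |x * c - y * s - c| ≤ R)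
    (hp : |x * c - y * s + c| ≤ R) : |y| ≤ R := by
  by_contra! hR
  set t := x * c - y * s with ht
  have htc : |t| + |c| ≤ R := by
    obtain ⟨hm₁, hm₂⟩ := abs_le.mp hm
    obtain ⟨hp₁, hp₂⟩ := abs_le.mp hp
    rcases abs_cases t with ⟨h, _⟩ | ⟨h, _⟩ <;> rcases abs_cases c with ⟨h', _⟩ | ⟨h', _⟩ <;>
      linarith
  have hys : |y| * |s| ≤ |x| * |c| + |t| := by
    rw [← abs_mul, ← abs_mul, show y * s = x * c - t by rw [ht]; ring]
    exact abs_sub _ _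
  have hcy : 2 * |c| < |y| := by rw [abs_mul, abs_two] at hc; linarith
  have := mul_one_sub_le_mul_one_sub (abs_nonneg x) (abs_nonneg c) (abs_nonneg s)
    (by rwa [sq_abs, sq_abs]) (by rwa [sq_abs]) hcy
  linarith

lemma re_mul_exp_ofReal_mul_I (z : ℂ) (γ : ℝ) :
    (z * exp (γ * I)).re = z.re * Real.cos γ - z.im * Real.sin γ := by
  simp only [mul_re, exp_ofReal_mul_I_re, exp_ofReal_mul_I_im]

lemma le_setWidth {K : Set ℂ} (hK : Bornology.IsBounded K) {r : ℝ}
    (h : ∀ γ R : ℝ, (∀ p ∈ K, ∀ q ∈ K, |(p * exp (γ * I)).re - (q * exp (γ * I)).re| ≤ R) →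
      r ≤ R) :
    r ≤ setWidth K := by
  refine le_ciInf fun γ => h γ _ fun p hp q hq => ?_
  obtain ⟨C, hC⟩ := isBounded_iff_forall_norm_le.1 hK
  have hproj : Bornology.IsBounded ((fun z : ℂ => (z * exp (γ * I)).re) '' K) := by
    refine isBounded_iff_forall_norm_le.2 ⟨C, ?_⟩
    rintro _ ⟨z, hz, rfl⟩
    calc ‖(z * exp (γ * I)).re‖ ≤ ‖z * exp (γ * I)‖ := abs_re_le_norm _
      _ = ‖z‖ := by rw [norm_mul, norm_exp_ofReal_mul_I, mul_one]
      _ ≤ C := hC z hz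
  rw [← Real.diam_eq hproj, ← Real.dist_eq]
  exact Metric.dist_le_diam_of_mem hproj ⟨p, hp, rfl⟩ ⟨q, hq, rfl⟩

lemma abs_re_add_one_sq_add_im_sq_le {z : ℂ} (hm : ‖z - 1‖ ≤ 2) (hp : ‖z + 1‖ ≤ 2) :
    (|z.re| + 1) ^ 2 + z.im ^ 2 ≤ 4 := by
  have hdisc (a : ℝ) (h : ‖z - a‖ ≤ 2) : (z.re - a) ^ 2 + z.im ^ 2 ≤ 4 := by
    have := pow_le_pow_left₀ (norm_nonneg _) h 2
    rw [Complex.sq_norm, normSq_apply] at this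
    norm_num [sq] at this ⊢
    linarith
  have hm' := hdisc 1 (by simpa using hm)
  have hp' := hdisc (-1) (by simpa using hp)
  rcases abs_cases z.re with ⟨h, _⟩ | ⟨h, _⟩ <;> rw [h] <;> linarith

theorem stmt_4_general (K : Set ℂ) (hdiam : Metric.diam K = 2)
    (h1 : (-1 : ℂ) ∈ K) (h2 : (1 : ℂ) ∈ K) :
    ∀ z ∈ K, |z.re| ≤ 1 ∧ |z.im| ≤ setWidth K := by
  intro z hz
  have hK : Bornology.IsBounded K := by
    by_contra hK
    simp [Metric.diam_eq_zero_of_unbounded hK] at hdiam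
  have hdist : ∀ w ∈ K, ‖z - w‖ ≤ 2 := fun w hw =>
    hdiam ▸ dist_eq_norm z w ▸ Metric.dist_le_diam_of_mem hK hz hw
  have hz' := abs_re_add_one_sq_add_im_sq_le (hdist 1 h2) (by simpa using hdist (-1) h1)
  refine ⟨by nlinarith [abs_nonneg z.re], le_setWidth hK fun γ R hR => ?_⟩
  simp only [re_mul_exp_ofReal_mul_I] at hR
  have h11 := hR 1 h2 (-1) h1
  have hz1 := hR z hz 1 h2
  have hz2 := hR z hz (-1) h1
  simp only [one_re, one_im, neg_re, neg_im, one_mul, neg_mul, zero_mul, neg_zero, sub_zero,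
    sub_neg_eq_add, ← two_mul] at h11 hz1 hz2
  exact abs_le_of_projection_bounds (Real.cos_sq_add_sin_sq γ) hz' h11 hz1 hz2

/-- If `K ⊂ ℂ` has diameter `2`, contains `-1` and `1`, and has positive width `w`,
then `K` is contained in the rectangle `[-1,1] × [-w, w]`. -/
theorem stmt_4 (K : Set ℂ) (hdiam : Metric.diam K = 2)
    (h1 : (-1 : ℂ) ∈ K) (h2 : (1 : ℂ) ∈ K) (hw : 0 < setWidth K) :
    ∀ z ∈ K, |z.re| ≤ 1 ∧ |z.im| ≤ setWidth K :=
  stmt_4_general K hdiam h1 h2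
end

section
/- For a triangle T in ℂ with vertices a = -1, b = 1, and c = x + iy, whose diameter (longest side) is the side ab of length 2, the width of T equals |y| (the length of the height drawn to the side ab). -/
open Complex

/-!
In every direction the width of a triangle is the spread of the projections of its vertices.
In coordinates `(p, q)` adapted to the direction, if `p b` lies between `p a` and `p c`, then
twice the signed area is `(p b - p a) (q c - q b) - (p c - p b) (q b - q a)`; as no side is longer
than the diameter `D`, this is at most `D · |p c - p a|`, i.e. `D` times the width in that
direction. For the triangle `-1, 1, c` this reads `2 |y| ≤ 2 w`, and the direction perpendicular
to `[-1, 1]` attains `w = |y|`.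
-/

open Metric Set

noncomputable def dirProj (γ : ℝ) (z : ℂ) : ℝ := (z * exp (γ * I)).re

lemma isLinearMap_dirProj (γ : ℝ) : IsLinearMap ℝ (dirProj γ) where
  map_add z w := by simp only [dirProj, add_mul, add_re]
  map_smul r z := by simp only [dirProj, smul_mul_assoc, smul_re, smul_eq_mul]

lemma lipschitzWith_one_dirProj (γ : ℝ) : LipschitzWith 1 (dirProj γ) :=
  LipschitzWith.of_dist_le_mul fun z w => by
    calc dist (dirProj γ z) (dirProj γ w) = |((z - w) * exp (γ * I)).re| := by
          rw [Real.dist_eq, dirProj, dirProj, sub_mul, sub_re]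
      _ ≤ ‖(z - w) * exp (γ * I)‖ := abs_re_le_norm _
      _ = 1 * dist z w := by rw [norm_mul, norm_exp_ofReal_mul_I, dist_eq]; simp

lemma dirProj_pi_div_two (z : ℂ) : dirProj (Real.pi / 2) z = -z.im := by
  simp [dirProj, ofReal_div, exp_pi_div_two_mul_I]

lemma setWidth_convexHull {s : Set ℂ} (hs : Bornology.IsBounded s) :
    setWidth (convexHull ℝ s) = ⨅ γ : ℝ, diam (dirProj γ '' s) := by
  refine iInf_congr fun γ => ?_
  have hbdd : Bornology.IsBounded (dirProj γ '' s) :=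
    (lipschitzWith_one_dirProj γ).isBounded_image hs
  change sSup (dirProj γ '' _) - sInf (dirProj γ '' _) = _
  rw [(isLinearMap_dirProj γ).image_convexHull, ← Real.diam_eq (isBounded_convexHull.2 hbdd),
    convexHull_diam]

def doubleSignedArea (a b c : ℂ) : ℝ :=
  (b.re - a.re) * (c.im - a.im) - (b.im - a.im) * (c.re - a.re)

lemma doubleSignedArea_rotate (a b c : ℂ) : doubleSignedArea b c a = doubleSignedArea a b c := by
  unfold doubleSignedArea; ring

lemma doubleSignedArea_mul (a b c u : ℂ) :
    doubleSignedArea (a * u) (b * u) (c * u) = normSq u * doubleSignedArea a b c := by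
  simp only [doubleSignedArea, mul_re, mul_im, normSq_apply]; ring

lemma abs_doubleSignedArea_le_of_mem_uIcc {a b c : ℂ} {D : ℝ} (hb : b.re ∈ uIcc a.re c.re)
    (hab : ‖b - a‖ ≤ D) (hbc : ‖c - b‖ ≤ D) :
    |doubleSignedArea a b c| ≤ D * dist a.re c.re := by
  have hsplit : doubleSignedArea a b c =
      (b.re - a.re) * (c.im - b.im) - (c.re - b.re) * (b.im - a.im) := by
    unfold doubleSignedArea; ring
  have him_ab : |b.im - a.im| ≤ D := (sub_im b a ▸ abs_im_le_norm (b - a)).trans hab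
  have him_bc : |c.im - b.im| ≤ D := (sub_im c b ▸ abs_im_le_norm (c - b)).trans hbc
  calc |doubleSignedArea a b c|
      ≤ |b.re - a.re| * |c.im - b.im| + |c.re - b.re| * |b.im - a.im| := by
        rw [hsplit, ← abs_mul, ← abs_mul]; exact abs_sub _ _
    _ ≤ |b.re - a.re| * D + |c.re - b.re| * D := by gcongr
    _ = D * (dist a.re b.re + dist b.re c.re) := by
        rw [Real.dist_eq, Real.dist_eq, abs_sub_comm a.re b.re, abs_sub_comm b.re c.re]; ring
    _ = D * dist a.re c.re := by
        rw [dist_add_dist_of_mem_segment (by rwa [segment_eq_uIcc])]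

lemma mem_uIcc_or_mem_uIcc_or_mem_uIcc (x y z : ℝ) :
    y ∈ uIcc x z ∨ z ∈ uIcc y x ∨ x ∈ uIcc z y := by
  simp only [mem_uIcc]
  rcases le_total x y with h | h <;> rcases le_total y z with h' | h' <;>
    rcases le_total x z with h'' | h'' <;> tauto

lemma abs_doubleSignedArea_le_mul_diam {a b c : ℂ} {D : ℝ}
    (hab : ‖b - a‖ ≤ D) (hbc : ‖c - b‖ ≤ D) (hca : ‖a - c‖ ≤ D) :
    |doubleSignedArea a b c| ≤ D * diam ({a.re, b.re, c.re} : Set ℝ) := by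
  have hD : 0 ≤ D := (norm_nonneg _).trans hab
  have hdist : ∀ x ∈ ({a.re, b.re, c.re} : Set ℝ), ∀ y ∈ ({a.re, b.re, c.re} : Set ℝ),
      D * dist x y ≤ D * diam ({a.re, b.re, c.re} : Set ℝ) := fun x hx y hy =>
    mul_le_mul_of_nonneg_left (dist_le_diam_of_mem (toFinite _).isBounded hx hy) hD
  rcases mem_uIcc_or_mem_uIcc_or_mem_uIcc a.re b.re c.re with h | h | h
  · exact (abs_doubleSignedArea_le_of_mem_uIcc h hab hbc).trans (hdist _ (by simp) _ (by simp))
  · rw [← doubleSignedArea_rotate]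
    exact (abs_doubleSignedArea_le_of_mem_uIcc h hbc hca).trans (hdist _ (by simp) _ (by simp))
  · rw [← doubleSignedArea_rotate, ← doubleSignedArea_rotate]
    exact (abs_doubleSignedArea_le_of_mem_uIcc h hca hab).trans (hdist _ (by simp) _ (by simp))

lemma abs_doubleSignedArea_le_mul_diam_dirProj {a b c : ℂ} {D : ℝ}
    (hab : ‖b - a‖ ≤ D) (hbc : ‖c - b‖ ≤ D) (hca : ‖a - c‖ ≤ D) (γ : ℝ) :
    |doubleSignedArea a b c| ≤ D * diam (dirProj γ '' {a, b, c}) := by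
  set u := exp (γ * I)
  have hu : ‖u‖ = 1 := norm_exp_ofReal_mul_I γ
  have hrot : ∀ z w : ℂ, ‖w * u - z * u‖ = ‖w - z‖ := fun z w => by
    rw [← sub_mul, norm_mul, hu, mul_one]
  have harea := doubleSignedArea_mul a b c u
  rw [normSq_eq_norm_sq, hu, one_pow, one_mul] at harea
  rw [← harea, image_insert_eq, image_insert_eq, image_singleton]
  exact abs_doubleSignedArea_le_mul_diam ((hrot a b).trans_le hab) ((hrot b c).trans_le hbc)
    ((hrot c a).trans_le hca)

theorem stmt_5_general (c : ℂ)
    (h1 : ‖c - (-1)‖ ≤ 2) (h2 : ‖c - 1‖ ≤ 2)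
    (T : Set ℂ) (hT : T = convexHull ℝ {-1, 1, c}) :
    setWidth T = |c.im| := by
  rw [hT, setWidth_convexHull (toFinite _).isBounded]
  have hlower (γ : ℝ) : |c.im| ≤ diam (dirProj γ '' {-1, 1, c}) := by
    have h := abs_doubleSignedArea_le_mul_diam_dirProj (a := -1) (b := 1)
      (by norm_num) h2 (by rwa [norm_sub_rev]) γ
    have harea : doubleSignedArea (-1) 1 c = 2 * c.im := by
      simp only [doubleSignedArea, neg_re, one_re, neg_im, one_im]; ring
    rw [harea, abs_mul, abs_two] at h
    linarith
  refine le_antisymm ?_ (le_ciInf hlower)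
  calc ⨅ γ : ℝ, diam (dirProj γ '' {-1, 1, c})
      ≤ diam (dirProj (Real.pi / 2) '' {-1, 1, c}) :=
        ciInf_le ⟨0, forall_mem_range.2 fun _ => diam_nonneg⟩ _
    _ = |c.im| := by
        rw [image_insert_eq, image_insert_eq, image_singleton]
        simp [dirProj_pi_div_two, diam_pair, Real.dist_eq]

/-- For the triangle `T` with vertices `-1`, `1`, `c = x + iy` (`y ≠ 0`), whose longest
side is the side from `-1` to `1` of length `2`, the width of `T` equals `|y|`. -/
theorem stmt_5 (c : ℂ) (hy : c.im ≠ 0)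
    (h1 : ‖c - (-1)‖ ≤ 2) (h2 : ‖c - 1‖ ≤ 2)
    (T : Set ℂ) (hT : T = convexHull ℝ {-1, 1, c}) :
    setWidth T = |c.im| :=
  stmt_5_general c h1 h2 T hT
end

section
/- Let K ⊂ ℂ be compact of diameter d = 2 containing -1 and 1, with width w > 0. Let μ be a finite nonnegative Borel measure on K, and suppose for some θ, δ ∈ (0,1) that μ(K_δ) ≥ θ μ(K), where K_δ = {x + iy ∈ K : x ∈ [-δ, δ]}. If w + δ < 1, then there exists A with either 0 < A ≤ δ or -δ ≤ A - w < 0 such that the set Q* = {x + iy ∈ K : A - w ≤ x ≤ A} satisfies μ(Q*) ≥ (w/2) θ μ(K). -/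
open Complex MeasureTheory

/-!
Cut the band `-δ ≤ x ≤ δ` into `N = ⌈2δ/w⌉` vertical strips of width `w`, the last one
shifted left so that it ends at `x = δ`. Since `N w < 2δ + w < 2`, the band, of mass at least
`θ μ(K) ≥ N (w/2) θ μ(K)`, is covered by `N` strips, so one of them has mass at least
`(w/2) θ μ(K)`. A strip ending at `A ≤ 0` is not shifted, hence begins at `A - w ≥ -δ`.
-/

lemma Icc_subset_iUnion_Icc_min {a b w : ℝ} {N : ℕ} (hw : 0 < w) (hN : 0 < N)
    (hab : b ≤ a + N * w) :
    Set.Icc a b ⊆ ⋃ i ∈ Finset.range N,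
      Set.Icc (min (a + (i + 1) * w) b - w) (min (a + (i + 1) * w) b) := by
  rintro x ⟨hax, hxb⟩
  set k := ⌊(x - a) / w⌋₊
  have hk_le : a + k * w ≤ x := by
    have := Nat.floor_le (div_nonneg (sub_nonneg.2 hax) hw.le)
    rw [le_div_iff₀ hw] at this; linarith
  have hk_lt : x < a + (k + 1) * w := by
    have := Nat.lt_floor_add_one ((x - a) / w)
    rw [div_lt_iff₀ hw] at this; linarith
  set i := min k (N - 1) with hi_def
  have hik : (i : ℝ) * w ≤ k * w := by gcongr; exact min_le_left _ _
  simp only [Set.mem_iUnion, Finset.mem_range]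
  refine ⟨i, (min_le_right _ _).trans_lt (Nat.sub_lt hN one_pos), ?_, le_min ?_ hxb⟩
  · linarith [min_le_left (a + (i + 1) * w) b]
  · rcases min_choice k (N - 1) with h | h <;> rw [hi_def, h]
    · exact hk_lt.le
    · rw [Nat.cast_sub hN, Nat.cast_one, sub_add_cancel]; linarith

lemma min_strip_end_cases {w δ : ℝ} (hw : 0 < w) (hδ : 0 < δ) (i : ℕ) :
    let A := min (-δ + (i + 1) * w) δ
    (0 < A ∧ A ≤ δ) ∨ (-δ ≤ A - w ∧ A - w < 0) := by
  intro A
  rcases lt_or_ge 0 A with hA | hA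
  · exact Or.inl ⟨hA, min_le_right _ _⟩
  · have hlt := (min_lt_iff.mp (hA.trans_lt hδ)).resolve_right (lt_irrefl δ)
    have hA' : A = -δ + (i + 1) * w := min_eq_left hlt.le
    right
    constructor <;> nlinarith [(i.cast_nonneg : (0 : ℝ) ≤ i)]

lemma MeasureTheory.exists_le_measure_of_subset_biUnion {α ι : Type*} [MeasurableSpace α]
    (μ : Measure α) {s : Finset ι} (hs : s.Nonempty) {E : Set α} {F : ι → Set α}
    (hEF : E ⊆ ⋃ i ∈ s, F i) {c : ENNReal} (hc : s.card * c ≤ μ E) :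
    ∃ i ∈ s, c ≤ μ (F i) := by
  refine ENNReal.exists_le_of_sum_le hs ?_
  calc ∑ _ ∈ s, c = s.card * c := by rw [Finset.sum_const, nsmul_eq_mul]
    _ ≤ μ E := hc
    _ ≤ ∑ i ∈ s, μ (F i) := (measure_mono hEF).trans (measure_biUnion_finset_le s F)

theorem stmt_6_general (K : Set ℂ)
    (w : ℝ) (hw : 0 < w)
    (μ : Measure ℂ)
    (θ δ : ℝ) (hθ : θ ∈ Set.Ioo (0 : ℝ) 1) (hδ : δ ∈ Set.Ioo (0 : ℝ) 1)
    (hμK : ENNReal.ofReal θ * μ K ≤ μ {z ∈ K | z.re ∈ Set.Icc (-δ) δ})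
    (hwδ : w + δ < 1) :
    ∃ A : ℝ, ((0 < A ∧ A ≤ δ) ∨ (-δ ≤ A - w ∧ A - w < 0)) ∧
      ENNReal.ofReal (w / 2 * θ) * μ K ≤ μ {z ∈ K | z.re ∈ Set.Icc (A - w) A} := by
  set N := ⌈2 * δ / w⌉₊
  have hδw : 0 < 2 * δ / w := div_pos (by linarith [hδ.1]) hw
  have hN : 0 < N := Nat.ceil_pos.2 hδw
  have hN_ge : δ ≤ -δ + N * w := by
    have := Nat.le_ceil (2 * δ / w); rw [div_le_iff₀ hw] at this; linarith
  have hN_le : (N : ℝ) * w ≤ 2 := by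
    have := mul_lt_mul_of_pos_right (Nat.ceil_lt_add_one hδw.le) hw
    rw [add_mul, div_mul_cancel₀ _ hw.ne', one_mul] at this; linarith
  have hcover : {z ∈ K | z.re ∈ Set.Icc (-δ) δ} ⊆ ⋃ i ∈ Finset.range N,
      {z ∈ K | z.re ∈ Set.Icc (min (-δ + (i + 1) * w) δ - w) (min (-δ + (i + 1) * w) δ)} := by
    rintro z ⟨hzK, hz⟩
    obtain ⟨i, hi, hzi⟩ := Set.mem_iUnion₂.1 (Icc_subset_iUnion_Icc_min hw hN hN_ge hz)
    exact Set.mem_iUnion₂.2 ⟨i, hi, hzK, hzi⟩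
  have hcard : ((Finset.range N).card : ENNReal) * (ENNReal.ofReal (w / 2 * θ) * μ K) ≤
      ENNReal.ofReal θ * μ K := by
    rw [Finset.card_range, ← mul_assoc, ← ENNReal.ofReal_natCast,
      ← ENNReal.ofReal_mul N.cast_nonneg]
    gcongr
    nlinarith [hθ.1]
  obtain ⟨i, -, hi⟩ := exists_le_measure_of_subset_biUnion μ
    (Finset.nonempty_range_iff.2 hN.ne') hcover (hcard.trans hμK)
  exact ⟨_, min_strip_end_cases hw hδ.1 i, hi⟩

/-- Lemma 2: if `K` is compact of diameter `2` containing `±1`, with width `w > 0`,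
`μ` is a finite measure with `μ(K_δ) ≥ θ μ(K)` and `w + δ < 1`, then there exists `A`
with either `0 < A ≤ δ` or `-δ ≤ A - w < 0` such that
`Q* = {x + iy ∈ K : A - w ≤ x ≤ A}` satisfies `μ(Q*) ≥ (w/2) θ μ(K)`. -/
theorem stmt_6 (K : Set ℂ) (hK : IsCompact K) (hdiam : Metric.diam K = 2)
    (h1 : (-1 : ℂ) ∈ K) (h2 : (1 : ℂ) ∈ K)
    (w : ℝ) (hwdef : setWidth K = w) (hw : 0 < w)
    (μ : Measure ℂ) [IsFiniteMeasure μ]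
    (θ δ : ℝ) (hθ : θ ∈ Set.Ioo (0 : ℝ) 1) (hδ : δ ∈ Set.Ioo (0 : ℝ) 1)
    (hμK : ENNReal.ofReal θ * μ K ≤ μ {z ∈ K | z.re ∈ Set.Icc (-δ) δ})
    (hwδ : w + δ < 1) :
    ∃ A : ℝ, ((0 < A ∧ A ≤ δ) ∨ (-δ ≤ A - w ∧ A - w < 0)) ∧
      ENNReal.ofReal (w / 2 * θ) * μ K ≤ μ {z ∈ K | z.re ∈ Set.Icc (A - w) A} :=
  stmt_6_general K w hw μ θ δ hθ hδ hμK hwδ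
end

section
/- Let 0 < M < 1 and 0 < w < (1-M)/4. Define h(x) = ((1+M)/2)·ln((1+x)² + w²) + ((1-M)/2)·ln((1-x)² + w²). Then h'(x) = 2u(x)/(((1+x)²+w²)((1-x)²+w²)), where u(x) = x³ - Mx² - (1-w²)x + M(1+w²), and u has exactly three real zeros: one in (-1, -M), one in (M, M + w/2), and one in (1 - w/2, 1). -/
/-!
The derivative is a direct computation. For the zeros, `u` takes the signs `-, +, +, -, -, +` at
`-1, -M, M, M + w/2, 1 - w/2, 1`, so the intermediate value theorem gives a zero in each of the
three intervals; these are distinct, and a monic cubic with three distinct zeros `r₁, r₂, r₃`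
equals `(x - r₁)(x - r₂)(x - r₃)`, so it has no other zero.
-/

open Real Set

theorem cubic_eq_prod_of_three_roots {R : Type*} [CommRing R] [IsDomain R] {a b c r₁ r₂ r₃ : R}
    (h₁₂ : r₁ ≠ r₂) (h₁₃ : r₁ ≠ r₃) (h₂₃ : r₂ ≠ r₃)
    (hr₁ : r₁ ^ 3 + a * r₁ ^ 2 + b * r₁ + c = 0) (hr₂ : r₂ ^ 3 + a * r₂ ^ 2 + b * r₂ + c = 0)
    (hr₃ : r₃ ^ 3 + a * r₃ ^ 2 + b * r₃ + c = 0) (x : R) :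
    x ^ 3 + a * x ^ 2 + b * x + c = (x - r₁) * (x - r₂) * (x - r₃) := by
  have d₁₂ : r₁ ^ 2 + r₁ * r₂ + r₂ ^ 2 + a * (r₁ + r₂) + b = 0 :=
    mul_left_cancel₀ (sub_ne_zero.mpr h₁₂) (by linear_combination hr₁ - hr₂)
  have d₁₃ : r₁ ^ 2 + r₁ * r₃ + r₃ ^ 2 + a * (r₁ + r₃) + b = 0 :=
    mul_left_cancel₀ (sub_ne_zero.mpr h₁₃) (by linear_combination hr₁ - hr₃)
  have e₁ : r₁ + r₂ + r₃ = -a :=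
    mul_left_cancel₀ (sub_ne_zero.mpr h₂₃) (by linear_combination d₁₂ - d₁₃)
  have e₂ : r₁ * r₂ + r₁ * r₃ + r₂ * r₃ = b := by linear_combination -d₁₂ + (r₁ + r₂) * e₁
  have e₃ : r₁ * r₂ * r₃ = -c := by linear_combination hr₁ - r₁ ^ 2 * e₁ + r₁ * e₂
  linear_combination x ^ 2 * e₁ - x * e₂ + e₃

theorem eq_zero_iff_of_three_roots {R : Type*} [CommRing R] [IsDomain R] {p : R → R}
    {a b c r₁ r₂ r₃ : R} (hp : ∀ x, p x = x ^ 3 + a * x ^ 2 + b * x + c)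
    (h₁₂ : r₁ ≠ r₂) (h₁₃ : r₁ ≠ r₃) (h₂₃ : r₂ ≠ r₃)
    (hr₁ : p r₁ = 0) (hr₂ : p r₂ = 0) (hr₃ : p r₃ = 0) (x : R) :
    p x = 0 ↔ x = r₁ ∨ x = r₂ ∨ x = r₃ := by
  rw [hp] at hr₁ hr₂ hr₃
  rw [hp, cubic_eq_prod_of_three_roots h₁₂ h₁₃ h₂₃ hr₁ hr₂ hr₃]
  simp only [mul_eq_zero, sub_eq_zero, or_assoc]

theorem hasDerivAt_log_sq_add_sq {f : ℝ → ℝ} {f' x w : ℝ} (hf : HasDerivAt f f' x) (hw : w ≠ 0) :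
    HasDerivAt (fun y => log (f y ^ 2 + w ^ 2)) (2 * f x * f' / (f x ^ 2 + w ^ 2)) x := by
  have hpos : 0 < f x ^ 2 + w ^ 2 := by positivity
  convert ((hf.fun_pow 2).add_const (w ^ 2)).log hpos.ne' using 1
  ring

theorem hasDerivAt_weighted_log_sum (M : ℝ) {w : ℝ} (hw : w ≠ 0) (x : ℝ) :
    HasDerivAt (fun y => (1 + M) / 2 * log ((1 + y) ^ 2 + w ^ 2)
        + (1 - M) / 2 * log ((1 - y) ^ 2 + w ^ 2))
      (2 * (x ^ 3 - M * x ^ 2 - (1 - w ^ 2) * x + M * (1 + w ^ 2))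
        / (((1 + x) ^ 2 + w ^ 2) * ((1 - x) ^ 2 + w ^ 2))) x := by
  have hleft :=
    (hasDerivAt_log_sq_add_sq ((hasDerivAt_id' x).const_add 1) hw).const_mul ((1 + M) / 2)
  have hright :=
    (hasDerivAt_log_sq_add_sq ((hasDerivAt_id' x).const_sub 1) hw).const_mul ((1 - M) / 2)
  have hpos_left : 0 < (1 + x) ^ 2 + w ^ 2 := by positivity
  have hpos_right : 0 < (1 - x) ^ 2 + w ^ 2 := by positivity
  refine (hleft.add hright).congr_deriv ?_
  field_simp
  ring

theorem cubic_sign_pattern {M w : ℝ} {u : ℝ → ℝ}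
    (hu : ∀ x, u x = x ^ 3 - M * x ^ 2 - (1 - w ^ 2) * x + M * (1 + w ^ 2))
    (hM : M ∈ Ioo (0 : ℝ) 1) (hw : 0 < w) (hw4 : w < (1 - M) / 4) :
    u (-1) < 0 ∧ 0 < u (-M) ∧ 0 < u M ∧ u (M + w / 2) < 0 ∧ u (1 - w / 2) < 0 ∧ 0 < u 1 := by
  obtain ⟨hM0, hM1⟩ := hM
  simp only [hu]
  refine ⟨?_, ?_, ?_, ?_, ?_, ?_⟩
  · nlinarith [mul_pos hw hw]
  · nlinarith [mul_pos hM0 hM0]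
  · nlinarith [mul_pos hM0 (mul_pos hw hw)]
  · nlinarith [mul_pos hw hw, mul_pos hM0 hw, sq_nonneg (M + w), mul_pos (mul_pos hw hw) hw]
  · nlinarith [mul_pos hw hw, mul_pos (mul_pos hw hw) hw]
  · nlinarith [mul_pos hM0 (mul_pos hw hw)]

/-- For `0 < M < 1`, `0 < w < (1-M)/4`, the function
`h(x) = ((1+M)/2) ln((1+x)² + w²) + ((1-M)/2) ln((1-x)² + w²)` has derivative
`h'(x) = 2u(x)/(((1+x)²+w²)((1-x)²+w²))` with
`u(x) = x³ - Mx² - (1-w²)x + M(1+w²)`, and `u` has exactly three real zeros: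
one in `(-1, -M)`, one in `(M, M + w/2)`, and one in `(1 - w/2, 1)`. -/
theorem stmt_8 (M w : ℝ) (hM : M ∈ Set.Ioo (0 : ℝ) 1) (hw : 0 < w) (hw4 : w < (1 - M) / 4)
    (h u : ℝ → ℝ)
    (hh : ∀ x : ℝ, h x = (1 + M) / 2 * Real.log ((1 + x) ^ 2 + w ^ 2)
        + (1 - M) / 2 * Real.log ((1 - x) ^ 2 + w ^ 2))
    (hu : ∀ x : ℝ, u x = x ^ 3 - M * x ^ 2 - (1 - w ^ 2) * x + M * (1 + w ^ 2)) :
    (∀ x : ℝ, HasDerivAt h (2 * u x / (((1 + x) ^ 2 + w ^ 2) * ((1 - x) ^ 2 + w ^ 2))) x) ∧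
    ∃ x₁ ∈ Set.Ioo (-1 : ℝ) (-M), ∃ x₂ ∈ Set.Ioo M (M + w / 2),
      ∃ x₃ ∈ Set.Ioo (1 - w / 2) 1,
        ∀ x : ℝ, u x = 0 ↔ (x = x₁ ∨ x = x₂ ∨ x = x₃) := by
  have hderiv (x : ℝ) :
      HasDerivAt h (2 * u x / (((1 + x) ^ 2 + w ^ 2) * ((1 - x) ^ 2 + w ^ 2))) x := by
    rw [funext hh, hu]
    exact hasDerivAt_weighted_log_sum M hw.ne' x
  obtain ⟨s₁, s₂, s₃, s₄, s₅, s₆⟩ := cubic_sign_pattern hu hM hw hw4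
  have hu_cont : Continuous u := by rw [funext hu]; fun_prop
  obtain ⟨hM0, hM1⟩ := hM
  obtain ⟨x₁, hx₁, hux₁⟩ := intermediate_value_Ioo (by linarith) hu_cont.continuousOn ⟨s₁, s₂⟩
  obtain ⟨x₂, hx₂, hux₂⟩ := intermediate_value_Ioo' (by linarith) hu_cont.continuousOn ⟨s₄, s₃⟩
  obtain ⟨x₃, hx₃, hux₃⟩ := intermediate_value_Ioo (by linarith) hu_cont.continuousOn ⟨s₅, s₆⟩
  have hu' (x : ℝ) : u x = x ^ 3 + -M * x ^ 2 + (w ^ 2 - 1) * x + M * (1 + w ^ 2) := by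
    rw [hu]; ring
  refine ⟨hderiv, x₁, hx₁, x₂, hx₂, x₃, hx₃,
    eq_zero_iff_of_three_roots hu' ?_ ?_ ?_ hux₁ hux₂ hux₃⟩ <;>
  · apply ne_of_lt
    linarith [hx₁.1, hx₁.2, hx₂.1, hx₂.2, hx₃.1, hx₃.2]
end

section
/- Let 0 < A' < 1, 0 < w, M be real numbers with A' + w ≤ M ≤ 1 and M - A' ≥ w, and set A = A' + w, a = ((1+A'-w)² + w²)/(1+A')², b = ((1-A'+w)² + w²)/(1-A')². If additionally -1 < A' - w and M - A ≥ w, then (1+M)·ln a + (1-M)·ln b ≤ -4w². -/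
/-- Let `0 < A' < 1`, `w > 0`, `M ≤ 1` with `A' - w > -1` and `M - (A' + w) ≥ w`
(so `A' + 2w ≤ M`). With `a = ((1+A'-w)² + w²)/(1+A')²` and
`b = ((1-A'+w)² + w²)/(1-A')²`, one has `(1+M) ln a + (1-M) ln b ≤ -4w²`. -/
theorem stmt_11 (A' w M a b : ℝ)
    (hA'0 : 0 < A') (hA'1 : A' < 1) (hw : 0 < w) (hM1 : M ≤ 1)
    (hAw : -1 < A' - w) (hMA : w ≤ M - (A' + w))
    (ha : a = ((1 + A' - w) ^ 2 + w ^ 2) / (1 + A') ^ 2)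
    (hb : b = ((1 - A' + w) ^ 2 + w ^ 2) / (1 - A') ^ 2) :
    (1 + M) * Real.log a + (1 - M) * Real.log b ≤ -4 * w ^ 2 := by
  have h1 : (0:ℝ) < 1 + A' := by linarith
  have h2 : (0:ℝ) < 1 - A' := by linarith
  have ha_pos : 0 < a := by
    rw [ha]
    apply div_pos
    · nlinarith [sq_nonneg (1 + A' - w)]
    · positivity
  have hb_pos : 0 < b := by
    rw [hb]
    apply div_pos
    · nlinarith [sq_nonneg (1 - A' + w)]
    · positivity
  have la : Real.log a ≤ a - 1 := Real.log_le_sub_one_of_pos ha_pos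
  have lb : Real.log b ≤ b - 1 := Real.log_le_sub_one_of_pos hb_pos
  have hM0 : 0 ≤ 1 + M := by linarith
  have hM1' : 0 ≤ 1 - M := by linarith
  have step : (1 + M) * Real.log a + (1 - M) * Real.log b ≤
      (1 + M) * (a - 1) + (1 - M) * (b - 1) := by
    have := mul_le_mul_of_nonneg_left la hM0
    have := mul_le_mul_of_nonneg_left lb hM1'
    linarith
  refine step.trans ?_
  have hae : a - 1 = 2 * w * (w - (1 + A')) / (1 + A') ^ 2 := by
    rw [ha]; field_simp; ring
  have hbe : b - 1 = 2 * w * (w + (1 - A')) / (1 - A') ^ 2 := by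
    rw [hb]; field_simp; ring
  rw [hae, hbe, ← mul_div_assoc, ← mul_div_assoc,
    div_add_div _ _ (by positivity : ((1+A')^2:ℝ) ≠ 0) (by positivity : ((1-A')^2:ℝ) ≠ 0)]
  rw [div_le_iff₀ (by positivity)]
  have hD : (0:ℝ) < 1 - A'^2 := by nlinarith
  nlinarith [mul_nonneg hw.le (mul_nonneg (by linarith : (0:ℝ) ≤ M - A' - 2*w) hD.le),
    mul_nonneg hw.le (mul_nonneg (mul_nonneg hw.le hD.le) (sq_nonneg A')),
    mul_nonneg hw.le (mul_nonneg (mul_nonneg hA'0.le (by linarith : (0:ℝ) ≤ M - A')) hw.le)]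
end

section
/- For any q > 0, the function φ(δ) = (1/q)·ln(1 + 4/δ) - ln(1 - δ) on (0,1) attains its unique minimum at δ₁ = (2/q)(√(q²+3q+1) - (q+1)) ∈ (0,1), and the minimum value of exp(φ) equals ((3q+2+2Q)/(5q))·(3+2q+2Q)^{1/q}, where Q = √(q²+3q+1). -/
/-! The derivative `φ'(δ) = 1/(1-δ) - 4/(qδ(δ+4))` is strictly increasing on `(0,1)`, so `φ` is
strictly convex, and a convex function is minimal at any critical point. `φ'` vanishes exactly
where `qδ² + 4(q+1)δ - 4 = 0`, whose positive root is `δ₁`. Using `Q² = q² + 3q + 1` one finds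
`1 + 4/δ₁ = 3 + 2q + 2Q` and `1/(1-δ₁) = (3q + 2 + 2Q)/(5q)`, which gives the value of `exp φ(δ₁)`. -/

open Real Set

theorem ConvexOn.isMinOn_of_hasDerivAt_eq_zero {D : Set ℝ} {f : ℝ → ℝ} {x : ℝ}
    (hf : ConvexOn ℝ D f) (hx : x ∈ interior D) (hfx : HasDerivAt f 0 x) : IsMinOn f D x :=
  hf.isMinOn_of_rightDeriv_eq_zero hx
    (hfx.hasDerivWithinAt.derivWithin (uniqueDiffWithinAt_Ioi x))

theorem strictConvexOn_of_hasDerivAt_of_strictMonoOn {D : Set ℝ} {f f' : ℝ → ℝ}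
    (hD : Convex ℝ D) (hDo : IsOpen D) (hf : ∀ x ∈ D, HasDerivAt f (f' x) x)
    (hf' : StrictMonoOn f' D) : StrictConvexOn ℝ D f := by
  refine StrictMonoOn.strictConvexOn_of_deriv hD
    (fun x hx => (hf x hx).continuousAt.continuousWithinAt) ?_
  rw [hDo.interior_eq]
  exact hf'.congr fun x hx => ((hf x hx).deriv).symm

noncomputable def phi (q δ : ℝ) : ℝ := 1 / q * log (1 + 4 / δ) - log (1 - δ)

noncomputable def phiDeriv (q δ : ℝ) : ℝ := 1 / (1 - δ) - 4 / (q * δ * (δ + 4))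

noncomputable def phiMinimizer (q : ℝ) : ℝ := 2 / q * (√(q ^ 2 + 3 * q + 1) - (q + 1))

variable {q : ℝ}

theorem hasDerivAt_phi {x : ℝ} (hq : q ≠ 0) (hx : x ∈ Ioo 0 1) :
    HasDerivAt (phi q) (phiDeriv q x) x := by
  obtain ⟨hx0, hx1⟩ := hx
  have hsub : HasDerivAt (fun δ : ℝ => 1 - δ) (-1) x := (hasDerivAt_id x).const_sub 1
  have hinv : HasDerivAt (fun δ : ℝ => 1 + 4 / δ) (4 * -(x ^ 2)⁻¹) x := by
    simpa only [div_eq_mul_inv] using ((hasDerivAt_inv hx0.ne').const_mul 4).const_add 1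
  refine ((hinv.log (by positivity)).const_mul (1 / q) |>.sub
    (hsub.log (by linarith))).congr_deriv ?_
  unfold phiDeriv
  field_simp
  ring

theorem strictMonoOn_phiDeriv (hq : 0 < q) : StrictMonoOn (phiDeriv q) (Ioo 0 1) := by
  intro x ⟨hx0, _⟩ y ⟨_, hy1⟩ hxy
  have h₁ : 1 / (1 - x) < 1 / (1 - y) := one_div_lt_one_div_of_lt (by linarith) (by linarith)
  have h₂ : 4 / (q * y * (y + 4)) < 4 / (q * x * (x + 4)) :=
    div_lt_div_of_pos_left (by norm_num) (by positivity) (by gcongr)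
  unfold phiDeriv
  linarith

theorem strictConvexOn_phi (hq : 0 < q) : StrictConvexOn ℝ (Ioo 0 1) (phi q) :=
  strictConvexOn_of_hasDerivAt_of_strictMonoOn (convex_Ioo 0 1) isOpen_Ioo
    (fun _ hx => hasDerivAt_phi hq.ne' hx) (strictMonoOn_phiDeriv hq)

theorem add_one_lt_sqrt (hq : 0 < q) : q + 1 < √(q ^ 2 + 3 * q + 1) :=
  Real.lt_sqrt_of_sq_lt (by nlinarith)

theorem two_mul_sqrt_lt (hq : 0 < q) : 2 * √(q ^ 2 + 3 * q + 1) < 3 * q + 2 := by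
  have := Real.sq_sqrt (show 0 ≤ q ^ 2 + 3 * q + 1 by positivity)
  nlinarith [Real.sqrt_nonneg (q ^ 2 + 3 * q + 1)]

theorem phiMinimizer_mem_Ioo (hq : 0 < q) : phiMinimizer q ∈ Ioo 0 1 := by
  have h₁ := add_one_lt_sqrt hq
  have h₂ := two_mul_sqrt_lt hq
  unfold phiMinimizer
  constructor
  · have : 0 < √(q ^ 2 + 3 * q + 1) - (q + 1) := by linarith
    positivity
  · rw [div_mul_eq_mul_div, div_lt_one hq]
    linarith

theorem phiMinimizer_isRoot (hq : 0 < q) :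
    q * phiMinimizer q ^ 2 + 4 * (q + 1) * phiMinimizer q - 4 = 0 := by
  have hQ := Real.sq_sqrt (show 0 ≤ q ^ 2 + 3 * q + 1 by positivity)
  unfold phiMinimizer
  generalize √(q ^ 2 + 3 * q + 1) = Q at hQ ⊢
  field_simp
  linear_combination 4 * hQ

theorem phiDeriv_phiMinimizer (hq : 0 < q) : phiDeriv q (phiMinimizer q) = 0 := by
  have hroot := phiMinimizer_isRoot hq
  obtain ⟨h₀, h₁⟩ := phiMinimizer_mem_Ioo hq
  generalize phiMinimizer q = δ at *
  unfold phiDeriv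
  have : 1 - δ ≠ 0 := by linarith
  field_simp
  linear_combination hroot

theorem isMinOn_phi_phiMinimizer (hq : 0 < q) : IsMinOn (phi q) (Ioo 0 1) (phiMinimizer q) := by
  have hmem := phiMinimizer_mem_Ioo hq
  refine (strictConvexOn_phi hq).convexOn.isMinOn_of_hasDerivAt_eq_zero
    (by rwa [interior_Ioo]) ?_
  simpa only [phiDeriv_phiMinimizer hq] using hasDerivAt_phi hq.ne' hmem

theorem exp_phi_phiMinimizer (hq : 0 < q) :
    exp (phi q (phiMinimizer q)) = (3 * q + 2 + 2 * √(q ^ 2 + 3 * q + 1)) / (5 * q) *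
      (3 + 2 * q + 2 * √(q ^ 2 + 3 * q + 1)) ^ (1 / q) := by
  have hQ := Real.sq_sqrt (show 0 ≤ q ^ 2 + 3 * q + 1 by positivity)
  have h₁ := add_one_lt_sqrt hq
  have h₂ := two_mul_sqrt_lt hq
  have hδ₁ := (phiMinimizer_mem_Ioo hq).2
  have hδ : phiMinimizer q = 2 / q * (√(q ^ 2 + 3 * q + 1) - (q + 1)) := rfl
  generalize phiMinimizer q = δ at *
  generalize √(q ^ 2 + 3 * q + 1) = Q at *
  have hlog : 1 + 4 / δ = 3 + 2 * q + 2 * Q := by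
    have : Q - (q + 1) ≠ 0 := by linarith
    rw [hδ]
    field_simp
    linear_combination (-4) * hQ
  have hinv : (1 - δ)⁻¹ = (3 * q + 2 + 2 * Q) / (5 * q) := by
    have : q - 2 * (Q - (q + 1)) ≠ 0 := by linarith
    rw [hδ]
    field_simp
    linear_combination 4 * hQ
  rw [phi, exp_sub, exp_log (by linarith), hlog, mul_comm, ← rpow_def_of_pos (by linarith),
    div_eq_mul_inv, hinv]
  ring

/-- For `q > 0`, the function `φ(δ) = (1/q) ln(1 + 4/δ) - ln(1 - δ)` on `(0,1)` is
strictly convex, attains its unique minimum at `δ₁ = (2/q)(√(q²+3q+1) - (q+1)) ∈ (0,1)`,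
and `exp(φ(δ₁)) = ((3q+2+2Q)/(5q)) (3+2q+2Q)^{1/q}` where `Q = √(q²+3q+1)`. -/
theorem stmt_13 (q : ℝ) (hq : 0 < q)
    (φ : ℝ → ℝ) (hφ : ∀ δ ∈ Set.Ioo (0 : ℝ) 1, φ δ = 1 / q * Real.log (1 + 4 / δ) - Real.log (1 - δ))
    (Q δ₁ : ℝ) (hQ : Q = Real.sqrt (q ^ 2 + 3 * q + 1))
    (hδ₁ : δ₁ = 2 / q * (Q - (q + 1))) :
    δ₁ ∈ Set.Ioo (0 : ℝ) 1 ∧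
    StrictConvexOn ℝ (Set.Ioo (0 : ℝ) 1) φ ∧
    (∀ δ ∈ Set.Ioo (0 : ℝ) 1, φ δ₁ ≤ φ δ) ∧
    (∀ δ ∈ Set.Ioo (0 : ℝ) 1, φ δ = φ δ₁ → δ = δ₁) ∧
    Real.exp (φ δ₁) = (3 * q + 2 + 2 * Q) / (5 * q) * (3 + 2 * q + 2 * Q) ^ (1 / q) := by
  subst hQ
  obtain rfl : δ₁ = phiMinimizer q := hδ₁
  have hφ' : EqOn φ (phi q) (Ioo 0 1) := hφ
  have hmem := phiMinimizer_mem_Ioo hq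
  have hconv := (strictConvexOn_phi hq).congr hφ'.symm
  have hmin : IsMinOn φ (Ioo 0 1) (phiMinimizer q) := isMinOn_iff.2 fun δ hδ => by
    simpa only [hφ' hδ, hφ' hmem] using isMinOn_iff.1 (isMinOn_phi_phiMinimizer hq) δ hδ
  refine ⟨hmem, hconv, fun δ hδ => hmin hδ, fun δ hδ hδmin => ?_, ?_⟩
  · refine hconv.eq_of_isMinOn ?_ hmin hδ hmem
    exact isMinOn_iff.2 fun y hy => hδmin ▸ isMinOn_iff.1 hmin y hy
  · rw [hφ' hmem, exp_phi_phiMinimizer hq]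
end

section
/- Let K ⊂ ℂ be a compact convex set of diameter 2 containing -1 and 1, with width w, and let λ be the planar Lebesgue measure restricted to K. Then for every δ ∈ (0,1), λ(K_δ) ≥ w·δ, where K_δ = {x+iy ∈ K : |x| ≤ δ}; consequently λ(K_δ)/λ(K) ≥ δ/4. -/
/-!
Every `z ∈ K` lies within `2` of both `-1` and `1`, so `|re z| ≤ 1`. The triangle `-1, 1, z` has
area `|im z|` and diameter at most `2`; since the area of a triangle is at most half its diameter
times its width in any direction, the width of `K` is at least `|im z|`. Hence
`K ⊆ [-1, 1] × [-w, w]` and `λ(K) ≤ 4w`.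

Conversely, the points `p, q ∈ K` of largest and smallest imaginary part satisfy
`p.im - q.im ≥ w`, and `K` contains the triangles `-1, 1, p` and `-1, 1, q`. Above `x` the
triangle `-1, 1, c + ih` has height `h · tent c x`, and `∫_{-δ}^{δ} tent c ≥ δ`, so by Fubini
`λ(K_δ) ≥ (p.im - q.im) δ ≥ wδ`.
-/

open Complex MeasureTheory

open ComplexConjugate

/-- Twice the signed area of the triangle with vertices `(pᵢ, qᵢ)`, expanded at the vertex whose
`p`-coordinate lies between the other two. -/
lemma abs_det_le_of_mul_nonpos {p₁ p₂ p₃ q₁ q₂ q₃ D : ℝ} (hmid : (p₂ - p₁) * (p₃ - p₁) ≤ 0)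
    (h₂ : |q₂ - q₁| ≤ D) (h₃ : |q₃ - q₁| ≤ D) :
    |(p₂ - p₁) * (q₃ - q₁) - (p₃ - p₁) * (q₂ - q₁)| ≤ D * |p₃ - p₂| := by
  have hsplit : |p₃ - p₂| = |p₂ - p₁| + |p₃ - p₁| := by
    have := (abs_add_eq_add_abs_iff (p₃ - p₁) (p₁ - p₂)).2 (by
      rcases mul_nonpos_iff.1 hmid with h | h
      · exact Or.inr ⟨by linarith, by linarith⟩
      · exact Or.inl ⟨by linarith, by linarith⟩)
    rw [abs_sub_comm p₁ p₂, sub_add_sub_cancel] at this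
    linarith
  calc |(p₂ - p₁) * (q₃ - q₁) - (p₃ - p₁) * (q₂ - q₁)|
      ≤ |p₂ - p₁| * |q₃ - q₁| + |p₃ - p₁| * |q₂ - q₁| := by
        rw [← abs_mul, ← abs_mul]; exact abs_sub _ _
    _ ≤ |p₂ - p₁| * D + |p₃ - p₁| * D := by gcongr
    _ = D * |p₃ - p₂| := by rw [hsplit]; ring

lemma abs_det_le_mul {p₁ p₂ p₃ q₁ q₂ q₃ D L : ℝ}
    (hq₁₂ : |q₁ - q₂| ≤ D) (hq₁₃ : |q₁ - q₃| ≤ D) (hq₂₃ : |q₂ - q₃| ≤ D)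
    (hp₁₂ : |p₁ - p₂| ≤ L) (hp₁₃ : |p₁ - p₃| ≤ L) (hp₂₃ : |p₂ - p₃| ≤ L) :
    |(p₂ - p₁) * (q₃ - q₁) - (p₃ - p₁) * (q₂ - q₁)| ≤ D * L := by
  have hD : 0 ≤ D := (abs_nonneg _).trans hq₁₂
  have hmid : (p₂ - p₁) * (p₃ - p₁) ≤ 0 ∨ (p₃ - p₂) * (p₁ - p₂) ≤ 0 ∨
      (p₁ - p₃) * (p₂ - p₃) ≤ 0 := by
    rcases le_total p₁ p₂ with h₁₂ | h₁₂ <;> rcases le_total p₂ p₃ with h₂₃ | h₂₃ <;>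
      rcases le_total p₁ p₃ with h₁₃ | h₁₃
    all_goals first
      | exact Or.inl (by nlinarith)
      | exact Or.inr (Or.inl (by nlinarith))
      | exact Or.inr (Or.inr (by nlinarith))
  rcases hmid with h | h | h
  · calc _ ≤ D * |p₃ - p₂| :=
          abs_det_le_of_mul_nonpos h (abs_sub_comm q₁ q₂ ▸ hq₁₂) (abs_sub_comm q₁ q₃ ▸ hq₁₃)
      _ ≤ D * L := by gcongr; rwa [abs_sub_comm]
  · calc _ = |(p₃ - p₂) * (q₁ - q₂) - (p₁ - p₂) * (q₃ - q₂)| := by ring_nf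
      _ ≤ D * |p₁ - p₃| := abs_det_le_of_mul_nonpos h (abs_sub_comm q₂ q₃ ▸ hq₂₃) hq₁₂
      _ ≤ D * L := by gcongr
  · calc _ = |(p₁ - p₃) * (q₂ - q₃) - (p₂ - p₃) * (q₁ - q₃)| := by ring_nf
      _ ≤ D * |p₂ - p₁| := abs_det_le_of_mul_nonpos h hq₁₃ hq₂₃
      _ ≤ D * L := by gcongr; rwa [abs_sub_comm]

/-- `(conj (b - a) * (c - a)).im` is twice the signed area of the triangle `a, b, c`; rotating by
`e` turns it into the determinant of `abs_det_le_mul`. -/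
lemma abs_im_conj_mul_le {a b c e : ℂ} (he : ‖e‖ = 1) {D L : ℝ}
    (hab : ‖a - b‖ ≤ D) (hac : ‖a - c‖ ≤ D) (hbc : ‖b - c‖ ≤ D)
    (hab' : |((a - b) * e).re| ≤ L) (hac' : |((a - c) * e).re| ≤ L)
    (hbc' : |((b - c) * e).re| ≤ L) :
    |(conj (b - a) * (c - a)).im| ≤ D * L := by
  have hq : ∀ x y : ℂ, ‖x - y‖ ≤ D → |(x * e).im - (y * e).im| ≤ D := fun x y hxy => by
    rw [← sub_im, ← sub_mul]
    exact (abs_im_le_norm _).trans (by rwa [norm_mul, he, mul_one])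
  have hp : ∀ x y : ℂ, |((x - y) * e).re| ≤ L → |(x * e).re - (y * e).re| ≤ L := fun x y h => by
    rwa [← sub_re, ← sub_mul]
  have he2 : e.re ^ 2 + e.im ^ 2 = 1 := by
    have := Complex.sq_norm e
    rw [he, normSq_apply] at this
    linear_combination -this
  convert abs_det_le_mul (hq a b hab) (hq a c hac) (hq b c hbc) (hp a b hab') (hp a c hac')
    (hp b c hbc') using 2
  simp only [mul_im, mul_re, conj_re, conj_im, sub_re, sub_im]
  linear_combination -((b.re - a.re) * (c.im - a.im) - (b.im - a.im) * (c.re - a.re)) * he2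

lemma abs_re_le_one_of_norm_le {z : ℂ} (h₁ : ‖z + 1‖ ≤ 2) (h₂ : ‖z - 1‖ ≤ 2) : |z.re| ≤ 1 := by
  have := (abs_re_le_norm (z + 1)).trans h₁
  have := (abs_re_le_norm (z - 1)).trans h₂
  simp only [add_re, sub_re, one_re, abs_le] at *
  constructor <;> linarith

lemma abs_re_lt_one_of_norm_le {z : ℂ} (h₁ : ‖z + 1‖ ≤ 2) (h₂ : ‖z - 1‖ ≤ 2) (him : z.im ≠ 0) :
    |z.re| < 1 := by
  have := (abs_re_lt_norm.2 (by simpa using him)).trans_le h₁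
  have := (abs_re_lt_norm.2 (by simpa using him)).trans_le h₂
  simp only [add_re, sub_re, one_re, abs_lt] at *
  constructor <;> linarith

noncomputable def projWidth (K : Set ℂ) (γ : ℝ) : ℝ :=
  sSup ((fun z : ℂ => (z * exp (γ * I)).re) '' K) - sInf ((fun z : ℂ => (z * exp (γ * I)).re) '' K)

section Width

variable {K : Set ℂ}

lemma abs_re_sub_mul_le_projWidth (hK : IsCompact K) {x y : ℂ} (hx : x ∈ K) (hy : y ∈ K)
    (γ : ℝ) : |((x - y) * exp (γ * I)).re| ≤ projWidth K γ := by
  have hf : Continuous fun z : ℂ => (z * exp (γ * I)).re := by fun_prop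
  have hbdd := hK.image hf
  rw [sub_mul, sub_re, abs_sub_le_iff, projWidth]
  constructor <;> apply sub_le_sub
  all_goals first
    | exact le_csSup hbdd.bddAbove (Set.mem_image_of_mem _ ‹_›)
    | exact csInf_le hbdd.bddBelow (Set.mem_image_of_mem _ ‹_›)

lemma setWidth_le_projWidth (hK : IsCompact K) (hne : K.Nonempty) (γ : ℝ) :
    setWidth K ≤ projWidth K γ := by
  obtain ⟨x, hx⟩ := hne
  refine ciInf_le ⟨0, ?_⟩ γ
  rintro _ ⟨γ', rfl⟩
  exact (abs_nonneg _).trans (abs_re_sub_mul_le_projWidth hK hx hx γ')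

lemma projWidth_neg_pi_div_two (K : Set ℂ) :
    projWidth K (-(Real.pi / 2)) = sSup (im '' K) - sInf (im '' K) := by
  have hexp : exp (↑(-(Real.pi / 2)) * I) = -I := by
    rw [exp_mul_I]
    push_cast
    simp
  have : (fun z : ℂ => (z * exp (↑(-(Real.pi / 2)) * I)).re) = im := by
    funext z
    rw [hexp]
    simp
  rw [projWidth, this]

lemma abs_im_le_projWidth (hK : IsCompact K) (hdiam : Metric.diam K ≤ 2) (h₁ : (-1 : ℂ) ∈ K)
    (h₂ : (1 : ℂ) ∈ K) {z : ℂ} (hz : z ∈ K) (γ : ℝ) : |z.im| ≤ projWidth K γ := by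
  have hD : ∀ {x y}, x ∈ K → y ∈ K → ‖x - y‖ ≤ 2 := fun {x y} hx hy =>
    dist_eq_norm x y ▸ (Metric.dist_le_diam_of_mem hK.isBounded hx hy).trans hdiam
  have hL : ∀ {x y}, x ∈ K → y ∈ K → |((x - y) * exp (γ * I)).re| ≤ projWidth K γ :=
    fun hx hy => abs_re_sub_mul_le_projWidth hK hx hy γ
  have := abs_im_conj_mul_le (norm_exp_ofReal_mul_I γ) (hD h₁ h₂) (hD h₁ hz) (hD h₂ hz)
    (hL h₁ h₂) (hL h₁ hz) (hL h₂ hz)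
  rw [show (conj (1 - -1 : ℂ) * (z - -1)).im = 2 * z.im by norm_num, abs_mul, abs_two] at this
  linarith

lemma abs_im_le_setWidth (hK : IsCompact K) (hdiam : Metric.diam K ≤ 2) (h₁ : (-1 : ℂ) ∈ K)
    (h₂ : (1 : ℂ) ∈ K) {z : ℂ} (hz : z ∈ K) : |z.im| ≤ setWidth K :=
  le_ciInf (abs_im_le_projWidth hK hdiam h₁ h₂ hz)

lemma exists_mem_setWidth_le_im_sub_im (hK : IsCompact K) (h₀ : (0 : ℂ) ∈ K) :
    ∃ p ∈ K, ∃ q ∈ K, q.im ≤ 0 ∧ 0 ≤ p.im ∧ setWidth K ≤ p.im - q.im := by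
  have him := hK.image continuous_im
  have hne : (im '' K).Nonempty := ⟨0, 0, h₀, rfl⟩
  obtain ⟨p, hp, hpsup⟩ := him.sSup_mem hne
  obtain ⟨q, hq, hqinf⟩ := him.sInf_mem hne
  refine ⟨p, hp, q, hq, ?_, ?_, ?_⟩
  · simpa [hqinf] using csInf_le him.bddBelow (Set.mem_image_of_mem im h₀)
  · simpa [hpsup] using le_csSup him.bddAbove (Set.mem_image_of_mem im h₀)
  · rw [hpsup, hqinf, ← projWidth_neg_pi_div_two]
    exact setWidth_le_projWidth hK ⟨0, h₀⟩ _

end Width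

/-- For `|c| < 1`, the piecewise linear function vanishing at `±1` and equal to `1` at `c`: the
triangle `-1, 1, c + ih` lies over `x` between heights `0` and `h * tent c x`. -/
noncomputable def tent (c x : ℝ) : ℝ := min ((x + 1) / (c + 1)) ((1 - x) / (1 - c))

section Tent

variable {c x : ℝ}

lemma continuous_tent (c : ℝ) : Continuous (tent c) := by
  unfold tent; fun_prop

lemma tent_nonneg (hc : |c| ≤ 1) (hx : |x| ≤ 1) : 0 ≤ tent c x := by
  rw [abs_le] at hc hx
  exact le_min (div_nonneg (by linarith) (by linarith)) (div_nonneg (by linarith) (by linarith))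

lemma mul_le_of_le_tent (hc : |c| ≤ 1) (hx : |x| ≤ 1) {t : ℝ} (ht : t ≤ tent c x) :
    t * (c + 1) ≤ x + 1 ∧ t * (1 - c) ≤ 1 - x := by
  rw [abs_le] at hc hx
  constructor
  · rcases (show 0 ≤ c + 1 by linarith).eq_or_lt with h | h
    · rw [← h]; linarith
    · exact (le_div_iff₀ h).1 (ht.trans (min_le_left _ _))
  · rcases (show 0 ≤ 1 - c by linarith).eq_or_lt with h | h
    · rw [← h]; linarith
    · exact (le_div_iff₀ h).1 (ht.trans (min_le_right _ _))

lemma tent_of_le (hc : |c| < 1) (hx : x ≤ c) : tent c x = (x + 1) / (c + 1) := by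
  rw [abs_lt] at hc
  refine min_eq_left ?_
  rw [div_le_div_iff₀ (by linarith) (by linarith)]
  nlinarith

lemma tent_of_ge (hc : |c| < 1) (hx : c ≤ x) : tent c x = (1 - x) / (1 - c) := by
  rw [abs_lt] at hc
  refine min_eq_right ?_
  rw [div_le_div_iff₀ (by linarith) (by linarith)]
  nlinarith

lemma integral_tent_of_le (hc : |c| < 1) {u v : ℝ} (huv : u ≤ v) (hv : v ≤ c) :
    ∫ x in u..v, tent c x = ((v ^ 2 - u ^ 2) / 2 + (v - u)) / (c + 1) := by
  rw [intervalIntegral.integral_congr (g := fun x => (x + 1) / (c + 1)) fun x hx =>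
    tent_of_le hc ((Set.uIcc_of_le huv ▸ hx).2.trans hv)]
  rw [intervalIntegral.integral_div, intervalIntegral.integral_add
    intervalIntegral.intervalIntegrable_id intervalIntegrable_const]
  simp

lemma integral_tent_of_ge (hc : |c| < 1) {u v : ℝ} (huv : u ≤ v) (hu : c ≤ u) :
    ∫ x in u..v, tent c x = ((v - u) - (v ^ 2 - u ^ 2) / 2) / (1 - c) := by
  rw [intervalIntegral.integral_congr (g := fun x => (1 - x) / (1 - c)) fun x hx =>
    tent_of_ge hc (hu.trans (Set.uIcc_of_le huv ▸ hx).1)]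
  rw [intervalIntegral.integral_div, intervalIntegral.integral_sub
    intervalIntegrable_const intervalIntegral.intervalIntegrable_id]
  simp

lemma le_integral_tent (hc : |c| < 1) {δ : ℝ} (hδ₀ : 0 ≤ δ) (hδ₁ : δ ≤ 1) :
    δ ≤ ∫ x in -δ..δ, tent c x := by
  have hc' := abs_lt.1 hc
  rcases le_total δ c with hδc | hcδ
  · rw [integral_tent_of_le hc (by linarith) hδc, le_div_iff₀ (by linarith)]
    nlinarith
  rcases le_total c (-δ) with hcδ' | hδc'
  · rw [integral_tent_of_ge hc (by linarith) hcδ', le_div_iff₀ (by linarith)]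
    nlinarith
  rw [← intervalIntegral.integral_add_adjacent_intervals (b := c)
      ((continuous_tent c).intervalIntegrable _ _) ((continuous_tent c).intervalIntegrable _ _),
    integral_tent_of_le hc hδc' le_rfl, integral_tent_of_ge hc hcδ le_rfl,
    div_add_div _ _ (by linarith) (by linarith), le_div_iff₀ (by nlinarith)]
  have hc2 : c ^ 2 ≤ δ := by nlinarith
  nlinarith [mul_nonneg (sub_nonneg.2 hδ₁) (sub_nonneg.2 hc2)]

lemma abs_im_mul_le_mul_integral_tent {z : ℂ} (h₁ : ‖z + 1‖ ≤ 2) (h₂ : ‖z - 1‖ ≤ 2) {δ : ℝ}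
    (hδ₀ : 0 ≤ δ) (hδ₁ : δ ≤ 1) : |z.im| * δ ≤ |z.im| * ∫ x in -δ..δ, tent z.re x := by
  rcases eq_or_ne z.im 0 with h | h
  · simp [h]
  · exact mul_le_mul_of_nonneg_left
      (le_integral_tent (abs_re_lt_one_of_norm_le h₁ h₂ h) hδ₀ hδ₁) (abs_nonneg _)

end Tent

section Region

variable {K : Set ℂ}

/-- `t ≤ tent r.re x` is what makes the weights of `1` and `-1` below nonnegative. -/
lemma mk_mem_of_le_tent (hconv : Convex ℝ K) (h₁ : (-1 : ℂ) ∈ K) (h₂ : (1 : ℂ) ∈ K) {r : ℂ}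
    (hr : r ∈ K) (hre : |r.re| ≤ 1) {x t : ℝ} (hx : |x| ≤ 1) (ht₀ : 0 ≤ t)
    (ht : t ≤ tent r.re x) : (⟨x, t * r.im⟩ : ℂ) ∈ K := by
  obtain ⟨hA, hB⟩ := mul_le_of_le_tent hre hx ht
  have key := hconv.sum_mem (t := Finset.univ)
    (w := ![t, (1 - t + x - t * r.re) / 2, (1 - t - x + t * r.re) / 2]) (z := ![r, 1, -1])
    (by intro i _; fin_cases i <;> dsimp <;> linarith) (by rw [Fin.sum_univ_three]; dsimp; ring)
    (by intro i _; fin_cases i <;> assumption)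
  convert key using 1
  rw [Fin.sum_univ_three]
  apply Complex.ext <;> dsimp <;>
    simp only [mul_re, mul_im, ofReal_re, ofReal_im, one_re, one_im, neg_re, neg_im] <;> ring

lemma regionBetween_tent_subset (hconv : Convex ℝ K) (h₁ : (-1 : ℂ) ∈ K) (h₂ : (1 : ℂ) ∈ K)
    {p q : ℂ} (hp : p ∈ K) (hq : q ∈ K) (hpre : |p.re| ≤ 1) (hqre : |q.re| ≤ 1)
    (hp₀ : 0 ≤ p.im) (hq₀ : q.im ≤ 0) {s : Set ℝ} (hs : s ⊆ Set.Icc (-1) 1) :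
    regionBetween (fun x => q.im * tent q.re x) (fun x => p.im * tent p.re x) s ⊆
      measurableEquivRealProd.symm ⁻¹' {z ∈ K | z.re ∈ s} := by
  rintro ⟨x, y⟩ ⟨hxs, hlo, hhi⟩
  dsimp only at hxs hlo hhi
  refine ⟨?_, hxs⟩
  have hx : |x| ≤ 1 := abs_le.2 (hs hxs)
  rcases le_total 0 y with hy | hy
  · have hp₀' : 0 < p.im := hp₀.lt_of_ne fun h => by
      rw [← h, zero_mul] at hhi; exact hhi.not_ge hy
    have := mk_mem_of_le_tent hconv h₁ h₂ hp hpre hx (div_nonneg hy hp₀)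
      ((div_le_iff₀ hp₀').2 (by rw [mul_comm]; exact hhi.le))
    rwa [div_mul_cancel₀ _ hp₀'.ne'] at this
  · have hq₀' : q.im < 0 := hq₀.lt_of_ne fun h => by
      rw [h, zero_mul] at hlo; exact hlo.not_ge hy
    have := mk_mem_of_le_tent hconv h₁ h₂ hq hqre hx (div_nonneg_of_nonpos hy hq₀)
      ((div_le_iff_of_neg hq₀').2 (by rw [mul_comm]; exact hlo.le))
    rwa [div_mul_cancel₀ _ hq₀'.ne] at this

lemma ofReal_integral_tent_le_volume (hconv : Convex ℝ K) (h₁ : (-1 : ℂ) ∈ K)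
    (h₂ : (1 : ℂ) ∈ K) {p q : ℂ} (hp : p ∈ K) (hq : q ∈ K) (hpre : |p.re| ≤ 1)
    (hqre : |q.re| ≤ 1) (hp₀ : 0 ≤ p.im) (hq₀ : q.im ≤ 0) {s : Set ℝ} (hsm : MeasurableSet s)
    (hs : s ⊆ Set.Icc (-1) 1) :
    ENNReal.ofReal (∫ x in s, (p.im * tent p.re x - q.im * tent q.re x)) ≤
      volume {z ∈ K | z.re ∈ s} := by
  have hint : ∀ r : ℂ, IntegrableOn (fun x => r.im * tent r.re x) s :=
    fun r => ((continuous_const.mul (continuous_tent r.re)).integrableOn_Icc).mono_set hs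
  have hle : ∀ x ∈ s, q.im * tent q.re x ≤ p.im * tent p.re x := fun x hx => by
    have hx' : |x| ≤ 1 := abs_le.2 (hs hx)
    nlinarith [tent_nonneg hpre hx', tent_nonneg hqre hx']
  rw [← Complex.volume_preserving_equiv_real_prod.symm.measure_preimage_equiv,
    Measure.volume_eq_prod]
  calc ENNReal.ofReal (∫ x in s, (p.im * tent p.re x - q.im * tent q.re x))
      = (volume.prod volume) (regionBetween (fun x => q.im * tent q.re x)
          (fun x => p.im * tent p.re x) s) :=
        (volume_regionBetween_eq_integral (hint q) (hint p) hsm hle).symm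
    _ ≤ _ := measure_mono (regionBetween_tent_subset hconv h₁ h₂ hp hq hpre hqre hp₀ hq₀ hs)

lemma ofReal_mul_le_volume_strip (hconv : Convex ℝ K) (h₁ : (-1 : ℂ) ∈ K)
    (h₂ : (1 : ℂ) ∈ K) (hnorm : ∀ z ∈ K, ‖z + 1‖ ≤ 2 ∧ ‖z - 1‖ ≤ 2) {p q : ℂ} (hp : p ∈ K)
    (hq : q ∈ K) (hp₀ : 0 ≤ p.im) (hq₀ : q.im ≤ 0) {δ : ℝ} (hδ₀ : 0 ≤ δ) (hδ₁ : δ ≤ 1) :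
    ENNReal.ofReal ((p.im - q.im) * δ) ≤ volume {z ∈ K | z.re ∈ Set.Icc (-δ) δ} := by
  obtain ⟨hp₁, hp₂⟩ := hnorm p hp
  obtain ⟨hq₁, hq₂⟩ := hnorm q hq
  refine le_trans (ENNReal.ofReal_le_ofReal ?_) (ofReal_integral_tent_le_volume hconv h₁ h₂ hp hq
    (abs_re_le_one_of_norm_le hp₁ hp₂) (abs_re_le_one_of_norm_le hq₁ hq₂) hp₀ hq₀
    measurableSet_Icc (Set.Icc_subset_Icc (by linarith) hδ₁))
  have hP := abs_im_mul_le_mul_integral_tent hp₁ hp₂ hδ₀ hδ₁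
  have hQ := abs_im_mul_le_mul_integral_tent hq₁ hq₂ hδ₀ hδ₁
  rw [abs_of_nonneg hp₀] at hP
  rw [abs_of_nonpos hq₀] at hQ
  have hi : ∀ r : ℂ, IntervalIntegrable (fun x => r.im * tent r.re x) volume (-δ) δ :=
    fun r => (continuous_const.mul (continuous_tent r.re)).intervalIntegrable _ _
  rw [integral_Icc_eq_integral_Ioc, ← intervalIntegral.integral_of_le (by linarith),
    intervalIntegral.integral_sub (hi p) (hi q), intervalIntegral.integral_const_mul,
    intervalIntegral.integral_const_mul]
  linarith

end Region

lemma volume_le_of_abs_le {K : Set ℂ} {a b : ℝ} (hre : ∀ z ∈ K, |z.re| ≤ a)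
    (him : ∀ z ∈ K, |z.im| ≤ b) :
    volume K ≤ ENNReal.ofReal (2 * a) * ENNReal.ofReal (2 * b) := by
  calc volume K = volume (measurableEquivRealProd.symm ⁻¹' K) :=
        (Complex.volume_preserving_equiv_real_prod.symm.measure_preimage_equiv K).symm
    _ ≤ volume (Set.Icc (-a) a ×ˢ Set.Icc (-b) b) :=
        measure_mono fun z hz => ⟨abs_le.1 (hre _ hz), abs_le.1 (him _ hz)⟩
    _ = ENNReal.ofReal (2 * a) * ENNReal.ofReal (2 * b) := by
        rw [Measure.volume_eq_prod, Measure.prod_prod, Real.volume_Icc, Real.volume_Icc,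
          sub_neg_eq_add, sub_neg_eq_add, two_mul, two_mul]

theorem stmt_15_general (K : Set ℂ) (hK : IsCompact K) (hconv : Convex ℝ K)
    (hdiam : Metric.diam K = 2) (h1 : (-1 : ℂ) ∈ K) (h2 : (1 : ℂ) ∈ K)
    (w : ℝ) (hwdef : setWidth K = w) :
    ∀ δ ∈ Set.Ioo (0 : ℝ) 1,
      ENNReal.ofReal (w * δ) ≤ volume {z ∈ K | z.re ∈ Set.Icc (-δ) δ} ∧
      ENNReal.ofReal (δ / 4) * volume K ≤ volume {z ∈ K | z.re ∈ Set.Icc (-δ) δ} := by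
  rintro δ ⟨hδ₀, hδ₁⟩
  have hnorm : ∀ z ∈ K, ‖z + 1‖ ≤ 2 ∧ ‖z - 1‖ ≤ 2 := fun z hz => by
    have hd := fun y (hy : y ∈ K) => hdiam ▸ Metric.dist_le_diam_of_mem hK.isBounded hz hy
    exact ⟨by simpa [dist_eq_norm] using hd _ h1, by simpa [dist_eq_norm] using hd _ h2⟩
  have h0 : (0 : ℂ) ∈ K := by
    convert hconv.add_smul_sub_mem h1 h2 (t := 1 / 2) (by norm_num) using 1
    norm_num
  obtain ⟨p, hp, q, hq, hq₀, hp₀, hwpq⟩ := exists_mem_setWidth_le_im_sub_im hK h0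
  have hstrip : ENNReal.ofReal (w * δ) ≤ volume {z ∈ K | z.re ∈ Set.Icc (-δ) δ} :=
    (ENNReal.ofReal_le_ofReal (by rw [← hwdef]; gcongr)).trans
      (ofReal_mul_le_volume_strip hconv h1 h2 hnorm hp hq hp₀ hq₀ hδ₀.le hδ₁.le)
  have hvol : volume K ≤ ENNReal.ofReal (2 * 1) * ENNReal.ofReal (2 * w) :=
    volume_le_of_abs_le (fun z hz => abs_re_le_one_of_norm_le (hnorm z hz).1 (hnorm z hz).2)
      (fun z hz => hwdef ▸ abs_im_le_setWidth hK hdiam.le h1 h2 hz)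
  refine ⟨hstrip, le_trans ?_ hstrip⟩
  calc ENNReal.ofReal (δ / 4) * volume K
      ≤ ENNReal.ofReal (δ / 4) * (ENNReal.ofReal (2 * 1) * ENNReal.ofReal (2 * w)) := by gcongr
    _ = ENNReal.ofReal (w * δ) := by
      rw [← ENNReal.ofReal_mul (by norm_num), ← ENNReal.ofReal_mul (by positivity)]
      ring_nf

/-- For a compact convex `K ⊂ ℂ` of diameter `2` containing `±1` with width `w > 0`,
for every `δ ∈ (0,1)` the area of `K_δ = {x+iy ∈ K : |x| ≤ δ}` is at least `wδ`, and
consequently `λ(K_δ)/λ(K) ≥ δ/4`. -/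
theorem stmt_15 (K : Set ℂ) (hK : IsCompact K) (hconv : Convex ℝ K)
    (hdiam : Metric.diam K = 2) (h1 : (-1 : ℂ) ∈ K) (h2 : (1 : ℂ) ∈ K)
    (w : ℝ) (hwdef : setWidth K = w) (hw : 0 < w) :
    ∀ δ ∈ Set.Ioo (0 : ℝ) 1,
      ENNReal.ofReal (w * δ) ≤ volume {z ∈ K | z.re ∈ Set.Icc (-δ) δ} ∧
      ENNReal.ofReal (δ / 4) * volume K ≤ volume {z ∈ K | z.re ∈ Set.Icc (-δ) δ} :=
  stmt_15_general K hK hconv hdiam h1 h2 w hwdef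
end

section
/- Let K ⊂ ℂ be a compact set, z ∈ ∂K a point such that there exists a closed disk D_R of radius R passing through z and containing K. Then for any polynomial p of degree n with all zeros in K, |p'(z)| ≥ (n/(2R))·|p(z)|. -/
/-!
At a point `z` with `p z ≠ 0` one has `p'(z) = p(z) · ∑ 1 / (z - w)` over the zeros `w` of `p`.
If `z` lies on the circle of radius `R` about `c` and `w` in the closed disk, then
`Re ((z - c) / (z - w)) ≥ 1/2`; summing over the `n` zeros gives
`R · |p'(z) / p(z)| ≥ Re ((z - c) · p'(z) / p(z)) ≥ n / 2`.
-/

open Polynomial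

namespace Complex

/-- With `u = z - c` and `w - c = u - d`, the hypothesis `‖u - d‖ ≤ ‖u‖` expands to
`‖d‖² ≤ 2 Re (u d̄)`, which is the claim after multiplying by `‖d‖²`. -/
theorem one_half_le_re_div_sub {z c w : ℂ} (hw : ‖w - c‖ ≤ ‖z - c‖) (hzw : z ≠ w) :
    1 / 2 ≤ ((z - c) / (z - w)).re := by
  have hd : 0 < normSq (z - w) := normSq_pos.2 (sub_ne_zero.2 hzw)
  have hsq : normSq (w - c) ≤ normSq (z - c) := by
    rw [normSq_eq_norm_sq, normSq_eq_norm_sq]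
    gcongr
  rw [div_re, ← add_div, le_div_iff₀ hd]
  simp only [normSq_apply, sub_re, sub_im] at hsq ⊢
  nlinarith

theorem card_div_two_le_re_mul_sum_inv_sub {z c : ℂ} {S : Multiset ℂ}
    (hS : ∀ w ∈ S, ‖w - c‖ ≤ ‖z - c‖ ∧ z ≠ w) :
    (Multiset.card S : ℝ) / 2 ≤ ((z - c) * (S.map fun w ↦ 1 / (z - w)).sum).re := by
  have hre : ∀ T : Multiset ℂ, T.sum.re = (T.map re).sum :=
    map_multiset_sum reAddGroupHom
  rw [← Multiset.sum_map_mul_left, hre, Multiset.map_map, div_eq_mul_one_div, ← nsmul_eq_mul,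
    ← Multiset.card_map (re ∘ fun w ↦ (z - c) * (1 / (z - w))) S]
  refine Multiset.card_nsmul_le_sum fun x hx ↦ ?_
  obtain ⟨w, hwS, rfl⟩ := Multiset.mem_map.1 hx
  simpa only [Function.comp_apply, mul_one_div] using
    one_half_le_re_div_sub (hS w hwS).1 (hS w hwS).2

theorem card_div_le_norm_sum_inv_sub {z c : ℂ} {S : Multiset ℂ}
    (hS : ∀ w ∈ S, ‖w - c‖ ≤ ‖z - c‖ ∧ z ≠ w) :
    (Multiset.card S : ℝ) / (2 * ‖z - c‖) ≤ ‖(S.map fun w ↦ 1 / (z - w)).sum‖ := by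
  rcases (norm_nonneg (z - c)).eq_or_lt with hzc | hzc
  · simp [← hzc]
  rw [← div_div, div_le_iff₀ hzc]
  calc (Multiset.card S : ℝ) / 2
      ≤ ((z - c) * (S.map fun w ↦ 1 / (z - w)).sum).re :=
        card_div_two_le_re_mul_sum_inv_sub hS
    _ ≤ ‖(z - c) * (S.map fun w ↦ 1 / (z - w)).sum‖ := re_le_norm _
    _ = _ := by rw [norm_mul, mul_comm]

end Complex

theorem stmt_18_general (K : Set ℂ) (R : ℝ)
    (z : ℂ) (c : ℂ) (hzc : dist z c = R) (hKD : K ⊆ Metric.closedBall c R)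
    (p : Polynomial ℂ) (n : ℕ) (hn : p.natDegree = n)
    (hroots : ∀ w ∈ p.roots, w ∈ K) :
    (n : ℝ) / (2 * R) * ‖p.eval z‖ ≤
      ‖(Polynomial.derivative p).eval z‖ := by
  by_cases hpz : p.eval z = 0
  · simp [hpz]
  have hR : ‖z - c‖ = R := by rw [← hzc, dist_eq_norm]
  have hS : ∀ w ∈ p.roots, ‖w - c‖ ≤ ‖z - c‖ ∧ z ≠ w := fun w hw ↦
    ⟨hR ▸ mem_closedBall_iff_norm.1 (hKD (hroots w hw)),
      fun hzw ↦ hpz (hzw ▸ isRoot_of_mem_roots hw)⟩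
  have hcard : Multiset.card p.roots = n := IsAlgClosed.card_roots_eq_natDegree.trans hn
  rw [(IsAlgClosed.splits p).eval_derivative_eq_eval_mul_sum hpz, norm_mul, mul_comm]
  gcongr
  simpa [hcard, hR] using Complex.card_div_le_norm_sum_inv_sub hS

/-- Turán's pointwise inequality: if `z ∈ K` lies on the boundary circle of a closed
disk of radius `R` containing `K`, then for any polynomial `p` of degree `n` with all
zeros (with multiplicity) in `K`, `|p'(z)| ≥ (n/(2R)) |p(z)|`. -/
theorem stmt_18 (K : Set ℂ) (hK : IsCompact K) (R : ℝ) (hR : 0 < R)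
    (z : ℂ) (hz : z ∈ K) (c : ℂ) (hzc : dist z c = R) (hKD : K ⊆ Metric.closedBall c R)
    (p : Polynomial ℂ) (n : ℕ) (hn : p.natDegree = n) (hp0 : p ≠ 0)
    (hroots : ∀ w ∈ p.roots, w ∈ K) :
    (n : ℝ) / (2 * R) * ‖p.eval z‖ ≤
      ‖(Polynomial.derivative p).eval z‖ :=
  stmt_18_general K R z c hzc hKD p n hn hroots
end

section
/- Let 0 < B' < 1, w > 0, M ∈ (0,1), and m = 5 + √(e²-1). Suppose 1 - B' ≥ (m-4)w and B' - M ≥ (5/2)w. Set a₁ = ((1+B'+w)² + w²)/(1+B')² and b₁ = ((1-B'-w)² + w²)/(1-B')². Then (1+M)·ln a₁ + (1-M)·ln b₁ ≤ -2w²·(3 - 5/(m-4)). -/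
set_option maxHeartbeats 800000 in
/-- Let `0 < B' < 1`, `w > 0`, `M ∈ (0,1)`, `m = 5 + √(e²-1)`. If `1 - B' ≥ (m-4)w`
and `B' - M ≥ (5/2)w`, then with `a₁ = ((1+B'+w)² + w²)/(1+B')²` and
`b₁ = ((1-B'-w)² + w²)/(1-B')²`, one has
`(1+M) ln a₁ + (1-M) ln b₁ ≤ -2w² (3 - 5/(m-4))`. -/
theorem stmt_19 (B' w M m a₁ b₁ : ℝ)
    (hB'0 : 0 < B') (hB'1 : B' < 1) (hw : 0 < w) (hM : M ∈ Set.Ioo (0 : ℝ) 1)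
    (hm : m = 5 + Real.sqrt (Real.exp 1 ^ 2 - 1))
    (h1 : (m - 4) * w ≤ 1 - B') (h2 : 5 / 2 * w ≤ B' - M)
    (ha₁ : a₁ = ((1 + B' + w) ^ 2 + w ^ 2) / (1 + B') ^ 2)
    (hb₁ : b₁ = ((1 - B' - w) ^ 2 + w ^ 2) / (1 - B') ^ 2) :
    (1 + M) * Real.log a₁ + (1 - M) * Real.log b₁ ≤ -2 * w ^ 2 * (3 - 5 / (m - 4)) := by
  obtain ⟨hM0, hM1⟩ := hM
  have he1 : (2.7182818283 : ℝ) < Real.exp 1 := Real.exp_one_gt_d9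
  have he2 : Real.exp 1 < 2.7182818286 := Real.exp_one_lt_d9
  have hsqnn : (0:ℝ) ≤ Real.exp 1 ^ 2 - 1 := by nlinarith
  have hsq : Real.sqrt (Real.exp 1 ^ 2 - 1) ^ 2 = Real.exp 1 ^ 2 - 1 :=
    Real.sq_sqrt hsqnn
  have hsnn : 0 ≤ Real.sqrt (Real.exp 1 ^ 2 - 1) := Real.sqrt_nonneg _
  have hc1 : (7/2 : ℝ) ≤ m - 4 := by
    rw [hm]; nlinarith [hsq, hsnn]
  have hc2 : m - 4 ≤ 18/5 := by
    rw [hm]; nlinarith [hsq, hsnn]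
  have hcpos : (0:ℝ) < m - 4 := by linarith
  have hs : 0 < 1 - B' := by linarith
  have ht : 0 < 1 + B' := by linarith
  have hsw : 7/2 * w ≤ 1 - B' := by nlinarith
  have ha₁pos : 0 < a₁ := by rw [ha₁]; positivity
  have hb₁pos : 0 < b₁ := by
    rw [hb₁]
    have : 0 < (1 - B' - w) ^ 2 + w ^ 2 := by positivity
    positivity
  have la : Real.log a₁ ≤ a₁ - 1 := Real.log_le_sub_one_of_pos ha₁pos
  have lb : Real.log b₁ ≤ b₁ - 1 := Real.log_le_sub_one_of_pos hb₁pos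
  have step1 : (1 + M) * Real.log a₁ + (1 - M) * Real.log b₁ ≤
      (1 + M) * (a₁ - 1) + (1 - M) * (b₁ - 1) := by nlinarith
  have e1 : a₁ - 1 = (2*w*(1+B') + 2*w^2) / (1+B')^2 := by
    rw [ha₁]; field_simp; ring
  have e2 : b₁ - 1 = (-(2*w*(1-B')) + 2*w^2) / (1-B')^2 := by
    rw [hb₁]; field_simp; ring
  have e3 : (1 + M) * (a₁ - 1) + (1 - M) * (b₁ - 1) =
      ((1+M)*(2*w*(1+B') + 2*w^2)*(1-B')^2 + (1-M)*(-(2*w*(1-B')) + 2*w^2)*(1+B')^2)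
        / ((1+B')^2 * (1-B')^2) := by
    rw [e1, e2]; field_simp
  have hd : 0 ≤ B' - M - 5/2 * w := by linarith
  have hBM : 0 ≤ B' - M := by linarith
  have h2s7w : 0 ≤ 2*(1-B') - 7*w := by linarith
  have hA : 0 ≤ 2*(1+B')*(1-B') - w*(1+B')^2 := by nlinarith [mul_pos ht hs]
  have key : (1 + M) * (a₁ - 1) + (1 - M) * (b₁ - 1) ≤ -(29/9) * w^2 := by
    rw [e3, div_le_iff₀ (by positivity)]
    nlinarith [mul_nonneg (mul_nonneg hw.le hd) hA,
      mul_nonneg (mul_nonneg hBM (sq_nonneg w)) (sq_nonneg (1-B')),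
      mul_nonneg (mul_nonneg (sq_nonneg w) h2s7w) (sq_nonneg (1+B')),
      mul_nonneg (mul_nonneg (mul_nonneg (sq_nonneg w) ht.le) hs.le)
        (sq_nonneg ((1-B') - 158/203)),
      mul_pos (mul_pos (mul_pos hw hw) ht) hs]
  have last : -(29/9 : ℝ) * w^2 ≤ -2 * w ^ 2 * (3 - 5 / (m - 4)) := by
    have h5 : (25/18 : ℝ) ≤ 5 / (m - 4) := by
      rw [div_le_div_iff₀ (by norm_num) hcpos]; nlinarith
    nlinarith [sq_nonneg w]
  linarith
end
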